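/- arXiv:1212.5261 — 2 statements merged into one kernel-verified Lean document; each statement's English description precedes it below -/
import Mathlib

section
/- Let G₁ be a finite simple graph with a distinguished vertex u and G₂ a finite simple graph with a distinguished vertex v, and let G = G₁|u : G₂|v be the graph on the disjoint union V(G₁) ⊔ V(G₂) whose edge set is the union of the edge sets of G₁ and G₂ together with the additional edge uv. Then, as polynomials in x, Q_G(x) = Q_{G₁}(x)·Q_{G₂}(x) − Q_{G₁}(x)·Q_{G₂|v}(x) − Q_{G₂}(x)·Q_{G₁|u}(x). -/
/-!
The signless Laplacian of `G₁|u : G₂|v` is the block-diagonal matrix `Q(G₁) ⊕ Q(G₂)` plus `w wᵀ`,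
where `w = e_u + e_v` is the incidence vector of the new edge. Hence `xI - Q(G)` is the rank-one
perturbation `B - w wᵀ` of the block-diagonal `B = (xI - Q(G₁)) ⊕ (xI - Q(G₂))`, and the matrix
determinant lemma `det (B - w wᵀ) = det B - wᵀ adj(B) w`, valid over any commutative ring, applies.
The adjugate of `B` is again block diagonal, so `wᵀ adj(B) w = adj(B)_uu + adj(B)_vv`, and these two
diagonal entries are the principal minors `Q_{G₁|u} Q_{G₂}` and `Q_{G₁} Q_{G₂|v}`.
-/

open Polynomial

/-- The signless Laplacian matrix `Q(G) = D(G) + A(G)` of a simple graph, over `ℝ`. -/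
noncomputable def signlessLaplacian {V : Type*} [Fintype V] [DecidableEq V]
    (G : SimpleGraph V) : Matrix V V ℝ :=
  letI := Classical.decRel G.Adj
  G.degMatrix ℝ + G.adjMatrix ℝ

/-- The signless Laplacian characteristic polynomial `Q_G(x) = det (x I - Q(G))`. -/
noncomputable def Qpoly {V : Type*} [Fintype V] [DecidableEq V] (G : SimpleGraph V) :
    Polynomial ℝ :=
  (signlessLaplacian G).charpoly

/-- The signless Laplacian coefficients: `φ_i(G)` is `(-1)^i` times the coefficient of
`x^(n-i)` in the signless Laplacian characteristic polynomial. -/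
noncomputable def phi {V : Type*} [Fintype V] [DecidableEq V] (G : SimpleGraph V) (i : ℕ) : ℝ :=
  (-1 : ℝ) ^ i * (Qpoly G).coeff (Fintype.card V - i)
/-- `Q_{G|w}(x)`: the determinant of the principal submatrix of `x I - Q(G)` obtained by
deleting the row and the column indexed by the vertex `w`. -/
noncomputable def QpolyDel {V : Type*} [Fintype V] [DecidableEq V] (G : SimpleGraph V)
    (w : V) : Polynomial ℝ :=
  letI : DecidablePred (fun x : V => x ≠ w) := fun _ => Classical.dec _
  ((Matrix.charmatrix (signlessLaplacian G)).submatrix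
      (fun i : {x : V // x ≠ w} => (i : V)) (fun j : {x : V // x ≠ w} => (j : V))).det
/-- The graph `G₁|u : G₂|v` on `V₁ ⊕ V₂`: the disjoint union of `G₁` and `G₂` together with
the extra edge `uv`. -/
def joinByEdge {V₁ V₂ : Type*} (G₁ : SimpleGraph V₁) (G₂ : SimpleGraph V₂) (u : V₁) (v : V₂) :
    SimpleGraph (V₁ ⊕ V₂) where
  Adj x y :=
    match x, y with
    | Sum.inl a, Sum.inl b => G₁.Adj a b
    | Sum.inl a, Sum.inr b => a = u ∧ b = v
    | Sum.inr a, Sum.inl b => a = v ∧ b = u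
    | Sum.inr a, Sum.inr b => G₂.Adj a b
  symm := by
    constructor
    rintro (a | a) (b | b) h
    · exact G₁.adj_symm h
    · exact ⟨h.2, h.1⟩
    · exact ⟨h.2, h.1⟩
    · exact G₂.adj_symm h
  loopless := by
    constructor
    rintro (a | a) h
    · exact G₁.ne_of_adj h rfl
    · exact G₂.ne_of_adj h rfl

namespace Matrix

variable {n m : Type*} [Fintype n] [DecidableEq n] [Fintype m] [DecidableEq m]
  {R : Type*} [CommRing R]

theorem det_updateRow_eq_vecMul_adjugate (A : Matrix n n R) (i : n) (b : n → R) :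
    (A.updateRow i b).det = (b ᵥ* adjugate A) i := by
  rw [← cramer_transpose_apply, cramer_eq_adjugate_mulVec, ← adjugate_transpose, mulVec_transpose]

theorem det_add_vecMulVec (A : Matrix n n R) (u v : n → R) :
    (A + vecMulVec u v).det = A.det + v ⬝ᵥ adjugate A *ᵥ u := by
  have partial_sums : ∀ s : Finset n,
      (A + vecMulVec (fun i => if i ∈ s then u i else 0) v).det =
        A.det + ∑ i ∈ s, u i * (A.updateRow i v).det := by
    intro s
    induction s using Finset.induction_on with
    | empty => simp [← Pi.zero_def]
    | insert k s hk ih =>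
      set c : n → R := fun i => if i ∈ s then u i else 0
      set B := A + vecMulVec c v
      have hinsert : A + vecMulVec (fun i => if i ∈ insert k s then u i else 0) v =
          B.updateRow k (B k + u k • v) := by
        ext i j
        rcases eq_or_ne i k with rfl | hi
        · simp [B, c, hk, vecMulVec_apply]
        · simp [B, c, hi, vecMulVec_apply]
      -- the rows of `B.updateRow k v` in `s` differ from those of `A.updateRow k v` by multiples
      -- of its row `k`, and the elementary factor performing these row operations has determinant 1
      have hfactor : B.updateRow k v = (1 + vecMulVec c (Pi.single k 1)) * A.updateRow k v := by
        rw [Matrix.add_mul, Matrix.one_mul]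
        ext i j
        rcases eq_or_ne i k with rfl | hi
        · simp [B, c, hk, mul_apply, vecMulVec_apply]
        · simp [B, c, hi, mul_apply, vecMulVec_apply, Pi.single_apply]
      have hfactor_det : (1 + vecMulVec c (Pi.single k 1)).det = 1 := by
        rw [vecMulVec_eq Unit, det_one_add_replicateCol_mul_replicateRow]
        simp [c, hk]
      rw [hinsert, det_updateRow_add, updateRow_eq_self, det_updateRow_smul, hfactor, det_mul,
        hfactor_det, one_mul, ih, Finset.sum_insert hk]
      ring
  rw [dotProduct_mulVec, dotProduct_comm]
  simpa [det_updateRow_eq_vecMul_adjugate, dotProduct] using partial_sums Finset.univ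

theorem det_sub_vecMulVec (A : Matrix n n R) (u v : n → R) :
    (A - vecMulVec u v).det = A.det - v ⬝ᵥ adjugate A *ᵥ u := by
  rw [sub_eq_add_neg, ← neg_vecMulVec, det_add_vecMulVec, mulVec_neg, dotProduct_neg,
    ← sub_eq_add_neg]

theorem adjugate_apply_self (A : Matrix n n R) (i : n) :
    adjugate A i i = (A.submatrix ((↑) : {j // j ≠ i} → n) (↑)).det := by
  rw [adjugate_apply, twoBlockTriangular_det _ (· ≠ i)]
  · have hminor : toSquareBlockProp (A.updateRow i (Pi.single i 1)) (· ≠ i) =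
        A.submatrix ((↑) : {j // j ≠ i} → n) (↑) := by
      ext ⟨k, hk⟩ ⟨l, hl⟩
      simp [toSquareBlockProp, toBlock, hk]
    have hpivot : toSquareBlockProp (A.updateRow i (Pi.single i 1)) (fun j => ¬j ≠ i) = 1 := by
      ext ⟨k, hk⟩ ⟨l, hl⟩
      simp only [not_not] at hk hl
      subst hk hl
      simp [toSquareBlockProp, toBlock]
    rw [hminor, hpivot, det_one, mul_one]
  · rintro k hk l hl
    simp only [not_not] at hk
    simp [hk, hl]

theorem det_fromBlocks_zero_updateRow_inl (A : Matrix m m R) (D : Matrix n n R) (i : m)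
    (r : m → R) (s : n → R) :
    ((fromBlocks A 0 0 D).updateRow (Sum.inl i) (Sum.elim r s)).det =
      (A.updateRow i r).det * D.det := by
  have : (fromBlocks A 0 0 D).updateRow (Sum.inl i) (Sum.elim r s) =
      fromBlocks (A.updateRow i r) (updateRow 0 i s) 0 D := by
    ext (k | k) (l | l) <;> simp [updateRow_apply]
  rw [this, det_fromBlocks_zero₂₁]

theorem det_fromBlocks_zero_updateRow_inr (A : Matrix m m R) (D : Matrix n n R) (i : n)
    (r : m → R) (s : n → R) :
    ((fromBlocks A 0 0 D).updateRow (Sum.inr i) (Sum.elim r s)).det =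
      A.det * (D.updateRow i s).det := by
  have : (fromBlocks A 0 0 D).updateRow (Sum.inr i) (Sum.elim r s) =
      fromBlocks A 0 (updateRow 0 i r) (D.updateRow i s) := by
    ext (k | k) (l | l) <;> simp [updateRow_apply]
  rw [this, det_fromBlocks_zero₁₂]

theorem adjugate_fromBlocks_zero (A : Matrix m m R) (D : Matrix n n R) :
    adjugate (fromBlocks A 0 0 D) = fromBlocks (D.det • adjugate A) 0 0 (A.det • adjugate D) := by
  ext (i | i) (j | j) <;>
    simp only [adjugate_apply, ← Sum.elim_single_zero, ← Sum.elim_zero_single,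
      det_fromBlocks_zero_updateRow_inl, det_fromBlocks_zero_updateRow_inr, mul_comm,
      fromBlocks_apply₁₁, fromBlocks_apply₁₂, fromBlocks_apply₂₁, fromBlocks_apply₂₂, smul_apply,
      smul_eq_mul, zero_apply]
  all_goals rw [det_eq_zero_of_row_eq_zero j (by simp), mul_zero]

theorem sumElim_dotProduct_adjugate_fromBlocks_zero_mulVec (A : Matrix m m R) (D : Matrix n n R)
    (x x' : m → R) (y y' : n → R) :
    Sum.elim x y ⬝ᵥ adjugate (fromBlocks A 0 0 D) *ᵥ Sum.elim x' y' =
      D.det * (x ⬝ᵥ adjugate A *ᵥ x') + A.det * (y ⬝ᵥ adjugate D *ᵥ y') := by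
  simp [adjugate_fromBlocks_zero, fromBlocks_mulVec, smul_mulVec]

end Matrix

lemma signlessLaplacian_apply {V : Type*} [Fintype V] [DecidableEq V] (G : SimpleGraph V)
    [DecidableRel G.Adj] (i j : V) :
    signlessLaplacian G i j =
      (if i = j then (G.degree i : ℝ) else 0) + if G.Adj i j then 1 else 0 := by
  unfold signlessLaplacian
  rw [Matrix.add_apply, SimpleGraph.adjMatrix_apply, SimpleGraph.degMatrix, Matrix.diagonal_apply]
  congr!

lemma QpolyDel_eq_adjugate {V : Type*} [Fintype V] [DecidableEq V] (G : SimpleGraph V) (w : V) :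
    QpolyDel G w = (signlessLaplacian G).charmatrix.adjugate w w := by
  unfold QpolyDel
  convert (Matrix.adjugate_apply_self _ w).symm

section joinByEdge

variable {V₁ V₂ : Type*} (G₁ : SimpleGraph V₁) (G₂ : SimpleGraph V₂) (u : V₁) (v : V₂)

@[simp] lemma joinByEdge_adj_inl_inl (a b : V₁) :
    (joinByEdge G₁ G₂ u v).Adj (.inl a) (.inl b) ↔ G₁.Adj a b := Iff.rfl

@[simp] lemma joinByEdge_adj_inl_inr (a : V₁) (b : V₂) :
    (joinByEdge G₁ G₂ u v).Adj (.inl a) (.inr b) ↔ a = u ∧ b = v := Iff.rfl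

@[simp] lemma joinByEdge_adj_inr_inl (a : V₂) (b : V₁) :
    (joinByEdge G₁ G₂ u v).Adj (.inr a) (.inl b) ↔ a = v ∧ b = u := Iff.rfl

@[simp] lemma joinByEdge_adj_inr_inr (a b : V₂) :
    (joinByEdge G₁ G₂ u v).Adj (.inr a) (.inr b) ↔ G₂.Adj a b := Iff.rfl

variable [Fintype V₁] [Fintype V₂] [DecidableEq V₁] [DecidableEq V₂]

lemma degree_joinByEdge_inl [DecidableRel G₁.Adj]
    [DecidableRel (joinByEdge G₁ G₂ u v).Adj] (a : V₁) :
    (joinByEdge G₁ G₂ u v).degree (.inl a) = G₁.degree a + if a = u then 1 else 0 := by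
  simp_rw [← SimpleGraph.card_neighborFinset_eq_degree, SimpleGraph.neighborFinset_eq_filter,
    Finset.card_filter, Fintype.sum_sum_type]
  by_cases h : a = u <;> simp [h]

lemma degree_joinByEdge_inr [DecidableRel G₂.Adj]
    [DecidableRel (joinByEdge G₁ G₂ u v).Adj] (a : V₂) :
    (joinByEdge G₁ G₂ u v).degree (.inr a) = G₂.degree a + if a = v then 1 else 0 := by
  simp_rw [← SimpleGraph.card_neighborFinset_eq_degree, SimpleGraph.neighborFinset_eq_filter,
    Finset.card_filter, Fintype.sum_sum_type]
  by_cases h : a = v <;> simp [h, add_comm]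

-- `Sum.elim (Pi.single u 1) (Pi.single v 1)` is the incidence vector of the new edge `uv`.
lemma signlessLaplacian_joinByEdge :
    signlessLaplacian (joinByEdge G₁ G₂ u v) =
      Matrix.fromBlocks (signlessLaplacian G₁) 0 0 (signlessLaplacian G₂) +
        Matrix.vecMulVec (Sum.elim (Pi.single u 1) (Pi.single v 1))
          (Sum.elim (Pi.single u 1) (Pi.single v 1)) := by
  classical
  ext (a | a) (b | b) <;>
    simp [signlessLaplacian_apply, degree_joinByEdge_inl, degree_joinByEdge_inr,
      Matrix.vecMulVec_apply, Pi.single_apply]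
  all_goals split_ifs <;> simp_all

lemma charmatrix_signlessLaplacian_joinByEdge :
    (signlessLaplacian (joinByEdge G₁ G₂ u v)).charmatrix =
      Matrix.fromBlocks (signlessLaplacian G₁).charmatrix 0 0 (signlessLaplacian G₂).charmatrix -
        Matrix.vecMulVec (Sum.elim (Pi.single u 1) (Pi.single v 1))
          (Sum.elim (Pi.single u 1) (Pi.single v 1)) := by
  rw [signlessLaplacian_joinByEdge]
  ext (a | a) (b | b) : 2 <;>
    simp [Matrix.charmatrix_apply, Matrix.diagonal_apply, Matrix.vecMulVec_apply, Pi.single_apply,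
      apply_ite C, sub_add_eq_sub_sub]

end joinByEdge

/-- the signless Laplacian characteristic polynomial of `G₁|u : G₂|v`
satisfies `Q_G = Q_{G₁}·Q_{G₂} − Q_{G₁}·Q_{G₂|v} − Q_{G₂}·Q_{G₁|u}`. -/
theorem Qpoly_joinByEdge {V₁ V₂ : Type*}
    [Fintype V₁] [Fintype V₂] [DecidableEq V₁] [DecidableEq V₂]
    (G₁ : SimpleGraph V₁) (G₂ : SimpleGraph V₂) (u : V₁) (v : V₂) :
    Qpoly (joinByEdge G₁ G₂ u v) =
      Qpoly G₁ * Qpoly G₂ - Qpoly G₁ * QpolyDel G₂ v - Qpoly G₂ * QpolyDel G₁ u := by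
  simp only [Qpoly, Matrix.charpoly, QpolyDel_eq_adjugate]
  rw [charmatrix_signlessLaplacian_joinByEdge, Matrix.det_sub_vecMulVec,
    Matrix.det_fromBlocks_zero₂₁, Matrix.sumElim_dotProduct_adjugate_fromBlocks_zero_mulVec]
  simp only [single_one_dotProduct, Matrix.mulVec_single_one, Matrix.col, Matrix.transpose_apply]
  ring
end

section
/- Let H be a finite simple graph with |V(H)| ≥ 2, let v be a vertex of H, let k ≥ 0, and let G be the graph on n = |V(H)| + k vertices obtained from H by attaching k new pendant vertices, each adjacent only to v. Then, as polynomials in x, Q_G(x) = (x−1)^k · Q_H(x) − k·x·(x−1)^{k−1} · Q_{H|v}(x). -/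
/-!
Order the vertices of `G` as `V ⊕ Fin k`. Then `x I - Q(G)` is a block matrix whose lower-right
block is `(x - 1) I`, whose off-diagonal blocks consist of the columns and rows `-e_v`, and whose
upper-left block is `x I - Q(H) - k E_vv` (the degree of `v` grows by `k`). For `x ≠ 1` the Schur
complement of the lower-right block is `x I - Q(H) - (k + k / (x - 1)) E_vv`; since the determinant
is affine in the `(v, v)` entry, its determinant is `Q_H(x) - (k x / (x - 1)) Q_{H|v}(x)`. So both
sides agree at every `x ≠ 1`, hence as polynomials.
-/

open Polynomial

/-- Attach `k` new pendant vertices, each adjacent only to the vertex `v` of `H`. -/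
def attachPendants {V : Type*} (H : SimpleGraph V) (v : V) (k : ℕ) :
    SimpleGraph (V ⊕ Fin k) where
  Adj x y :=
    match x, y with
    | Sum.inl a, Sum.inl b => H.Adj a b
    | Sum.inl a, Sum.inr _ => a = v
    | Sum.inr _, Sum.inl b => b = v
    | Sum.inr _, Sum.inr _ => False
  symm := by
    constructor
    rintro (a | a) (b | b) h
    · exact H.adj_symm h
    · exact h
    · exact h
    · exact h
  loopless := by
    constructor
    rintro (a | a) h
    · exact H.irrefl h
    · exact h

open Matrix Polynomial

section Determinants

variable {n : Type*} [Fintype n] [DecidableEq n] {R : Type*} [CommRing R]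

theorem det_updateCol_single_one (N : Matrix n n R) (w : n) [Fintype {x // x ≠ w}] :
    (N.updateCol w (Pi.single w 1)).det = (N.submatrix ((↑) : {x // x ≠ w} → n) (↑)).det := by
  let e := Equiv.sumCompl (fun x : n => x ≠ w)
  have hblocks : (N.updateCol w (Pi.single w 1)).submatrix e e =
      fromBlocks (N.submatrix (↑) (↑)) 0 (of fun _ (j : {x // x ≠ w}) => N w j) 1 := by
    ext (i | i) (j | j)
    · simp [e, j.2]
    · simp [e, i.2, not_not.mp j.2]
    · simp [e, j.2, not_not.mp i.2]
    · obtain rfl : i = j := Subtype.ext ((not_not.mp i.2).trans (not_not.mp j.2).symm)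
      simp [e, not_not.mp i.2]
  rw [← det_submatrix_equiv_self e, hblocks, det_fromBlocks_zero₁₂, det_one, mul_one]

theorem det_sub_smul_single (N : Matrix n n R) (w : n) (c : R) [Fintype {x // x ≠ w}] :
    (N - c • single w w 1).det = N.det - c * (N.submatrix ((↑) : {x // x ≠ w} → n) (↑)).det := by
  have hcol : N - c • single w w 1 = N.updateCol w ((fun i => N i w) + (-c) • Pi.single w 1) := by
    ext i j
    simp only [Matrix.sub_apply, Matrix.smul_apply, single_apply, updateCol_apply, Pi.add_apply,
      Pi.smul_apply, Pi.single_apply, smul_eq_mul]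
    grind
  rw [hcol, det_updateCol_add, updateCol_eq_self, det_updateCol_smul, det_updateCol_single_one]
  ring

theorem charmatrix_map_eval (M : Matrix n n R) (t : R) :
    (charmatrix M).map (eval t) = scalar n t - M := by
  ext i j
  obtain rfl | hij := eq_or_ne i j <;> simp [*]

omit [Fintype n] in
theorem replicateCol_mul_replicateRow_single (k : ℕ) (v : n) :
    replicateCol (Fin k) (Pi.single v (1 : R)) * replicateRow (Fin k) (Pi.single v (1 : R)) =
      (k : R) • single v v 1 := by
  ext a b
  simp only [mul_apply, replicateCol_apply, replicateRow_apply, Matrix.smul_apply, single_apply,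
    Pi.single_apply, Finset.sum_const, Finset.card_univ, Fintype.card_fin, smul_eq_mul, nsmul_eq_mul]
  grind

variable {K : Type*} [Field K]

theorem det_fromBlocks_smul_one₂₂ {m : Type*} [Fintype m] [DecidableEq m] (A : Matrix m m K)
    (B : Matrix m n K) (C : Matrix n m K) {d : K} (hd : d ≠ 0) :
    (fromBlocks A B C (d • 1)).det = d ^ Fintype.card n * (A - d⁻¹ • (B * C)).det := by
  have hfactor :
      fromBlocks A B C (d • 1) = fromBlocks 1 0 0 (d • 1) * fromBlocks A B (d⁻¹ • C) 1 := by
    simp [fromBlocks_multiply, smul_smul, hd]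
  rw [hfactor, det_mul, det_fromBlocks_zero₂₁, det_fromBlocks_one₂₂, det_one, one_mul, det_smul,
    det_one, mul_one, Matrix.mul_smul]

theorem det_fromBlocks_pendants (A : Matrix n n K) (v : n) (k : ℕ) {d : K} (hd : d ≠ 0)
    [Fintype {x // x ≠ v}] :
    (fromBlocks (A - (k : K) • single v v 1) (-replicateCol (Fin k) (Pi.single v 1))
        (-replicateRow (Fin k) (Pi.single v 1)) (d • 1)).det =
      d ^ k * A.det - k * (d + 1) * d ^ (k - 1) *
        (A.submatrix ((↑) : {x // x ≠ v} → n) (↑)).det := by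
  rw [det_fromBlocks_smul_one₂₂ _ _ _ hd, Fintype.card_fin, Matrix.neg_mul, Matrix.mul_neg,
    neg_neg, replicateCol_mul_replicateRow_single, smul_smul, sub_sub, ← add_smul,
    det_sub_smul_single]
  rcases k with _ | k
  · simp
  · rw [pow_succ, Nat.add_sub_cancel]
    field_simp

end Determinants

section Graphs

variable {V : Type*} [Fintype V] [DecidableEq V]

theorem signlessLaplacian_eq_diagonal_add (G : SimpleGraph V) [DecidableRel G.Adj] :
    signlessLaplacian G = diagonal (G.adjMatrix ℝ *ᵥ 1) + G.adjMatrix ℝ := by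
  simp only [signlessLaplacian, SimpleGraph.degMatrix]
  congr! with i
  rw [← Function.const_one, SimpleGraph.adjMatrix_mulVec_const_apply, mul_one]
  congr!

theorem eval_QpolyDel (G : SimpleGraph V) (w : V) (t : ℝ) [Fintype {x // x ≠ w}] :
    (QpolyDel G w).eval t =
      ((scalar V t - signlessLaplacian G).submatrix ((↑) : {x // x ≠ w} → V) (↑)).det := by
  rw [← charmatrix_map_eval, submatrix_map, ← coe_evalRingHom, ← RingHom.mapMatrix_apply,
    ← RingHom.map_det, QpolyDel]
  congr!

omit [Fintype V] in
theorem adjMatrix_attachPendants (R : Type*) [NonAssocSemiring R] (H : SimpleGraph V)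
    [DecidableRel H.Adj] (v : V) (k : ℕ) [DecidableRel (attachPendants H v k).Adj] :
    (attachPendants H v k).adjMatrix R = fromBlocks (H.adjMatrix R)
      (replicateCol (Fin k) (Pi.single v 1)) (replicateRow (Fin k) (Pi.single v 1)) 0 := by
  ext (a | p) (b | q) <;>
    simp only [SimpleGraph.adjMatrix_apply, fromBlocks_apply₁₁, fromBlocks_apply₁₂,
      fromBlocks_apply₂₁, fromBlocks_apply₂₂, replicateCol_apply, replicateRow_apply,
      Pi.single_apply, Matrix.zero_apply] <;>
    split_ifs <;> simp_all [attachPendants]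

theorem signlessLaplacian_attachPendants (H : SimpleGraph V) (v : V) (k : ℕ) :
    signlessLaplacian (attachPendants H v k) =
      fromBlocks (signlessLaplacian H + (k : ℝ) • single v v 1)
        (replicateCol (Fin k) (Pi.single v 1)) (replicateRow (Fin k) (Pi.single v 1)) 1 := by
  classical
  have hcol : replicateCol (Fin k) (Pi.single v (1 : ℝ)) *ᵥ 1 = (k : ℝ) • Pi.single v 1 := by
    ext a
    simp [mulVec, dotProduct, mul_comm]
  have hrow : replicateRow (Fin k) (Pi.single v (1 : ℝ)) *ᵥ 1 = fun _ => 1 := by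
    ext p
    simp [mulVec, dotProduct]
  rw [signlessLaplacian_eq_diagonal_add, adjMatrix_attachPendants,
    signlessLaplacian_eq_diagonal_add, fromBlocks_mulVec, Pi.one_comp, Pi.one_comp, hcol, hrow,
    zero_mulVec, add_zero, ← fromBlocks_diagonal, fromBlocks_add, diagonal_one, zero_add, zero_add,
    add_zero, ← diagonal_single, ← diagonal_smul, add_right_comm, diagonal_add]
  rfl

theorem scalar_sub_signlessLaplacian_attachPendants (H : SimpleGraph V) (v : V) (k : ℕ) (x : ℝ) :
    scalar (V ⊕ Fin k) x - signlessLaplacian (attachPendants H v k) =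
      fromBlocks (scalar V x - signlessLaplacian H - (k : ℝ) • single v v 1)
        (-replicateCol (Fin k) (Pi.single v 1)) (-replicateRow (Fin k) (Pi.single v 1))
        ((x - 1) • 1) := by
  have hscalar : scalar (V ⊕ Fin k) x = fromBlocks (scalar V x) 0 0 (scalar (Fin k) x) := by
    simp [scalar_apply]
  rw [signlessLaplacian_attachPendants, hscalar, sub_eq_add_neg, fromBlocks_neg, fromBlocks_add,
    zero_add, zero_add, ← sub_eq_add_neg, ← sub_eq_add_neg, sub_sub, sub_smul, one_smul,
    smul_one_eq_diagonal, ← scalar_apply]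

end Graphs

theorem Qpoly_attachPendants_general {V : Type*} [Fintype V] [DecidableEq V]
    (H : SimpleGraph V) (v : V) (k : ℕ) :
    Qpoly (attachPendants H v k) =
      (X - 1) ^ k * Qpoly H - (k : ℝ[X]) * X * (X - 1) ^ (k - 1) * QpolyDel H v := by
  refine eq_of_infinite_eval_eq _ _
    ((Set.finite_singleton (1 : ℝ)).infinite_compl.mono fun x hx1 => ?_)
  have hx : x - 1 ≠ 0 := sub_ne_zero.2 hx1
  simp only [Set.mem_ofPred_eq, Qpoly, eval_charpoly, eval_QpolyDel,
    scalar_sub_signlessLaplacian_attachPendants, det_fromBlocks_pendants _ _ _ hx, sub_add_cancel,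
    eval_sub, eval_mul, eval_pow, eval_natCast, eval_X, eval_one]

/-- attaching `k` pendant vertices at a vertex `v` of a graph `H` with at least
two vertices gives `Q_G(x) = (x−1)^k Q_H(x) − k·x·(x−1)^{k−1} Q_{H|v}(x)`. -/
theorem Qpoly_attachPendants {V : Type*} [Fintype V] [DecidableEq V]
    (H : SimpleGraph V) (hV : 2 ≤ Fintype.card V) (v : V) (k : ℕ) :
    Qpoly (attachPendants H v k) =
      (X - 1) ^ k * Qpoly H - (k : ℝ[X]) * X * (X - 1) ^ (k - 1) * QpolyDel H v :=
  Qpoly_attachPendants_general H v k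
end
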